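/- Exact sampled ECT on finite families (Theorem 4): Let F be a finite family of embedded simplicial complexes (K, x) in ℝ^d of dimension at most D with injective vertex maps, colored with common GSWL data; fix finite sets V ⊂ S^{d−1} and T ⊂ ℝ; let L ≥ D, let m be the maximum over ℓ ≤ L of the number of distinct round-ℓ GSWL colors across F, and let H ≥ 3m. Then there exist architecture parameters E, (φ_ℓ), (ψ_ℓ), (μ_ℓ) and a map Ψ : ℝ^H → ℝ^{|V|·|T|} such that for every (K, x) ∈ F, Σ_{σ∈K} (−1)^{dim σ} Ψ(h^L_σ) equals the vector (ECT(K, x)(ν, t))_{(ν,t) ∈ V×T}. -/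

import Mathlib

open Finset MeasureTheory
attribute [local instance] Classical.propDecidable
open scoped RealInnerProductSpace BigOperators ENNReal

/-- `ℝ^n` as Euclidean space. -/
abbrev Eu (n : ℕ) : Type := EuclideanSpace ℝ (Fin n)

/-- A finite abstract simplicial complex on the vertex type `V`:
a finite collection of nonempty finite vertex sets closed under taking nonempty subsets. -/
def IsComplex {V : Type*} [DecidableEq V] (K : Finset (Finset V)) : Prop :=
  (∀ σ ∈ K, σ.Nonempty) ∧ ∀ σ ∈ K, ∀ τ, τ ⊆ σ → τ.Nonempty → τ ∈ K

/-- The boundary `∂σ`: faces of `σ` in `K` of dimension `dim σ - 1`. -/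
def bdry {V : Type*} [DecidableEq V] (K : Finset (Finset V)) (σ : Finset V) :
    Finset (Finset V) :=
  K.filter fun τ => τ ⊆ σ ∧ τ.card + 1 = σ.card

/-- The coboundary `coface σ`: simplices of `K` of dimension `dim σ + 1` containing `σ`. -/
def cofc {V : Type*} [DecidableEq V] (K : Finset (Finset V)) (σ : Finset V) :
    Finset (Finset V) :=
  K.filter fun ρ => σ ⊆ ρ ∧ ρ.card = σ.card + 1

/-- GSWL data: a color set `C` containing all pairs `(k, f)` (the vertex case carrying a
point of `ℝ^d` as its feature), feature functions `Φ_k` on finite point sets in `ℝ^d`,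
and an injective `HASH` on triples (color, boundary multiset, coboundary multiset). -/
structure GSWLData (d : ℕ) (C F : Type*) where
  /-- the color `(0, p)` of a vertex embedded at `p ∈ ℝ^d` -/
  vcol : Eu d → C
  /-- the color `(k, f)` of a `k`-simplex carrying feature `f` -/
  scol : ℕ → F → C
  /-- the feature functions `Φ_k` -/
  feat : ℕ → Finset (Eu d) → F
  /-- the hash function -/
  hash : C → Multiset C → Multiset C → C
  vcol_inj : Function.Injective vcol
  scol_inj : ∀ ⦃k f k' f'⦄, scol k f = scol k' f' → k = k' ∧ f = f'
  vcol_ne_scol : ∀ p k f, vcol p ≠ scol k f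
  hash_inj : ∀ ⦃c M N c' M' N'⦄, hash c M N = hash c' M' N' → c = c' ∧ M = M' ∧ N = N'

/-- Initial GSWL color: `c⁰_{{v}} = (0, x_v)` on a vertex and
`c⁰_σ = (k, Φ_k {x_v : v ∈ σ})` on a `k`-simplex with `k ≥ 1`. -/
noncomputable def gcol0 {V : Type*} [DecidableEq V] {d : ℕ} {C F : Type*}
    (G : GSWLData d C F) (x : V → Eu d) (σ : Finset V) : C :=
  if h : ∃ v, σ = {v} then G.vcol (x h.choose)
  else G.scol (σ.card - 1) (G.feat (σ.card - 1) (σ.image x))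

/-- GSWL color refinement:
`c^{ℓ+1}_σ = HASH (c^ℓ_σ, {{c^ℓ_τ : τ ∈ ∂σ}}, {{c^ℓ_ρ : ρ ∈ coface σ}})`. -/
noncomputable def gcol {V : Type*} [DecidableEq V] {d : ℕ} {C F : Type*}
    (G : GSWLData d C F) (K : Finset (Finset V)) (x : V → Eu d) :
    ℕ → Finset V → C
  | 0 => gcol0 G x
  | ℓ + 1 => fun σ =>
      G.hash (gcol G K x ℓ σ) ((bdry K σ).val.map (gcol G K x ℓ))
        ((cofc K σ).val.map (gcol G K x ℓ))

/-- Hidden states of the simplicial message-passing architecture: `h⁰_σ = E (c⁰_σ)` and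
`h^{ℓ+1}_σ = μ_ℓ (h^ℓ_σ, Σ_{τ∈∂σ} φ_ℓ h^ℓ_τ, Σ_{ρ∈coface σ} ψ_ℓ h^ℓ_ρ)`. -/
noncomputable def hid {V : Type*} [DecidableEq V] {d : ℕ} {C F : Type*} {H : ℕ}
    (G : GSWLData d C F) (E : C → Eu H) (φ ψ : ℕ → Eu H → Eu H)
    (μ : ℕ → Eu H × Eu H × Eu H → Eu H)
    (K : Finset (Finset V)) (x : V → Eu d) : ℕ → Finset V → Eu H
  | 0 => fun σ => E (gcol0 G x σ)
  | ℓ + 1 => fun σ =>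
      μ ℓ (hid G E φ ψ μ K x ℓ σ,
        ∑ τ ∈ bdry K σ, φ ℓ (hid G E φ ψ μ K x ℓ τ),
        ∑ ρ ∈ cofc K σ, ψ ℓ (hid G E φ ψ μ K x ℓ ρ))

/-- Entry time `t_ν(σ) = max_{u ∈ σ} ⟨x_u, ν⟩` of a simplex `σ` in direction `ν`. -/
noncomputable def entry {V : Type*} {d : ℕ} (x : V → Eu d) (ν : Eu d) (σ : Finset V) : ℝ :=
  WithBot.unbotD 0 ((σ.image fun u => ⟪x u, ν⟫).max)

/-- The Euler Characteristic Transform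
`ECT (K,x) (ν,t) = Σ_{σ∈K} (-1)^{dim σ} · 1{t_ν(σ) ≤ t}`. -/
noncomputable def ECT {V : Type*} {d : ℕ} (K : Finset (Finset V)) (x : V → Eu d)
    (ν : Eu d) (t : ℝ) : ℝ :=
  ∑ σ ∈ K, (-1 : ℝ) ^ (σ.card - 1) * (if entry x ν σ ≤ t then 1 else 0)

namespace ECTAux

lemma twoPow_sum_inj {S T : Finset ℕ} (h : (∑ j ∈ S, (2:ℝ)^j) = ∑ j ∈ T, (2:ℝ)^j) : S = T := by
  have h2 : ((∑ j ∈ S, 2^j : ℕ) : ℝ) = ((∑ j ∈ T, 2^j : ℕ) : ℝ) := by push_cast; simpa using h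
  exact Finset.geomSum_injective le_rfl (by exact_mod_cast h2)

lemma bdry_mem {V : Type*} [DecidableEq V] {K : Finset (Finset V)} {σ τ : Finset V}
    (h : τ ∈ bdry K σ) : τ ∈ K ∧ τ ⊆ σ ∧ τ.card + 1 = σ.card := by
  rw [bdry, Finset.mem_filter] at h; exact ⟨h.1, h.2.1, h.2.2⟩

lemma erase_mem_bdry {V : Type*} [DecidableEq V] {K : Finset (Finset V)}
    (hK : IsComplex K) {σ : Finset V} (hσ : σ ∈ K) (h2 : 2 ≤ σ.card) {w : V} (hw : w ∈ σ) :
    σ.erase w ∈ bdry K σ := by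
  have hcard : (σ.erase w).card + 1 = σ.card := by
    rw [Finset.card_erase_of_mem hw]; omega
  have hne : (σ.erase w).Nonempty := by
    rw [← Finset.card_pos]; omega
  rw [bdry, Finset.mem_filter]
  exact ⟨hK.2 σ hσ _ (Finset.erase_subset _ _) hne, Finset.erase_subset _ _, hcard⟩

lemma bdry_nonempty {V : Type*} [DecidableEq V] {K : Finset (Finset V)}
    (hK : IsComplex K) {σ : Finset V} (hσ : σ ∈ K) (h2 : 2 ≤ σ.card) :
    (bdry K σ).Nonempty := by
  obtain ⟨w, hw⟩ := Finset.card_pos.1 (by omega : 0 < σ.card)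
  exact ⟨σ.erase w, erase_mem_bdry hK hσ h2 hw⟩

lemma facet_union {V : Type*} [DecidableEq V] {d : ℕ} {K : Finset (Finset V)}
    (hK : IsComplex K) (x : V → Eu d) {σ : Finset V} (hσ : σ ∈ K) (h2 : 2 ≤ σ.card) :
    (bdry K σ).sup (fun τ => τ.image x) = σ.image x := by
  apply le_antisymm
  · exact Finset.sup_le fun τ hτ => Finset.image_subset_image (bdry_mem hτ).2.1
  · intro a ha
    rw [Finset.mem_image] at ha
    obtain ⟨v, hv, rfl⟩ := ha
    obtain ⟨w, hw, hwv⟩ := Finset.exists_mem_ne (s := σ) (by omega) v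
    have hle := Finset.le_sup (f := fun τ => τ.image x) (erase_mem_bdry hK hσ h2 hw)
    exact hle (Finset.mem_image_of_mem x (Finset.mem_erase.2 ⟨fun h => hwv h.symm, hv⟩))

variable {d H : ℕ}

/-- encoding of a finite point set -/
noncomputable def encA (z : Fin H) (code : Finset (Eu d) → ℕ) (A : Finset (Eu d)) : Eu H :=
  ((code A : ℝ) + 1) • EuclideanSpace.single z 1

lemma smul_single_coord (z : Fin H) (r : ℝ) :
    (r • (EuclideanSpace.single z (1:ℝ))) z = r := by
  simp [EuclideanSpace.single_apply]

lemma smul_single_inj (z : Fin H) {r s : ℝ}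
    (h : r • (EuclideanSpace.single z (1:ℝ)) = s • EuclideanSpace.single z 1) : r = s := by
  have := congrArg (fun v => v z) h
  rwa [smul_single_coord, smul_single_coord] at this

lemma encA_ne_zero (z : Fin H) (code : Finset (Eu d) → ℕ) (A : Finset (Eu d)) :
    encA z code A ≠ 0 := by
  intro h
  have h0 : ((code A : ℝ) + 1) • (EuclideanSpace.single z (1:ℝ)) =
      (0:ℝ) • EuclideanSpace.single z 1 := by
    rw [zero_smul]; exact h
  have := smul_single_inj z h0
  have h1 : (0:ℝ) ≤ (code A : ℝ) := Nat.cast_nonneg _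
  linarith

lemma encA_inj {z : Fin H} {code : Finset (Eu d) → ℕ} {Imgs : Finset (Finset (Eu d))}
    (hcode : ∀ A ∈ Imgs, ∀ B ∈ Imgs, code A = code B → A = B)
    {A B : Finset (Eu d)} (hA : A ∈ Imgs) (hB : B ∈ Imgs)
    (h : encA z code A = encA z code B) : A = B := by
  have h2 := smul_single_inj z h
  have h3 : (code A : ℝ) = code B := by linarith
  exact hcode A hA B hB (by exact_mod_cast h3)

/-- the E of the architecture -/
noncomputable def EA {C : Type*} (vcol : Eu d → C) (enc : Finset (Eu d) → Eu H) (c : C) :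
    Eu H :=
  if h : ∃ p, c = vcol p then enc {h.choose} else 0

/-- the φ of the architecture -/
noncomputable def phiA (Imgs : Finset (Finset (Eu d))) (z : Fin H)
    (code : Finset (Eu d) → ℕ) (v : Eu H) : Eu H :=
  if h : ∃ A, A ∈ Imgs ∧ v = encA z code A then
    ((2:ℝ)^(code h.choose)) • EuclideanSpace.single z 1 else 0

lemma phiA_encA {Imgs : Finset (Finset (Eu d))} {z : Fin H} {code : Finset (Eu d) → ℕ}
    (hcode : ∀ A ∈ Imgs, ∀ B ∈ Imgs, code A = code B → A = B)
    {A : Finset (Eu d)} (hA : A ∈ Imgs) :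
    phiA Imgs z code (encA z code A) = ((2:ℝ)^(code A)) • EuclideanSpace.single z 1 := by
  have hex : ∃ B, B ∈ Imgs ∧ encA z code A = encA z code B := ⟨A, hA, rfl⟩
  rw [phiA, dif_pos hex]
  have hc := hex.choose_spec
  rw [encA_inj hcode hc.1 hA hc.2.symm]

lemma phiA_zero (Imgs : Finset (Finset (Eu d))) (z : Fin H) (code : Finset (Eu d) → ℕ) :
    phiA Imgs z code 0 = 0 := by
  rw [phiA, dif_neg]
  rintro ⟨A, -, h⟩
  exact encA_ne_zero z code A h.symm

/-- the decoder used inside μ -/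
noncomputable def decA (Imgs : Finset (Finset (Eu d))) (z : Fin H)
    (code : Finset (Eu d) → ℕ) (b : Eu H) : Eu H :=
  if h : ∃ S : Finset (Finset (Eu d)), S.Nonempty ∧ S ⊆ Imgs ∧
      b = (∑ A ∈ S, (2:ℝ)^(code A)) • EuclideanSpace.single z 1 then
    encA z code (h.choose.sup id) else 0

lemma sum_eq_of_subset {Imgs : Finset (Finset (Eu d))} {code : Finset (Eu d) → ℕ}
    (hcode : ∀ A ∈ Imgs, ∀ B ∈ Imgs, code A = code B → A = B)
    {S T : Finset (Finset (Eu d))} (hS : S ⊆ Imgs) (hT : T ⊆ Imgs)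
    (h : (∑ A ∈ S, (2:ℝ)^(code A)) = ∑ A ∈ T, (2:ℝ)^(code A)) : S = T := by
  have hS' : ∑ A ∈ S, (2:ℝ)^(code A) = ∑ j ∈ S.image code, (2:ℝ)^j :=
    (Finset.sum_image (fun A hA B hB hab => hcode A (hS hA) B (hS hB) hab)).symm
  have hT' : ∑ A ∈ T, (2:ℝ)^(code A) = ∑ j ∈ T.image code, (2:ℝ)^j :=
    (Finset.sum_image (fun A hA B hB hab => hcode A (hT hA) B (hT hB) hab)).symm
  have himg : S.image code = T.image code := twoPow_sum_inj (by rw [← hS', ← hT']; exact h)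
  ext A
  constructor
  · intro hA
    have : code A ∈ T.image code := himg ▸ Finset.mem_image_of_mem code hA
    obtain ⟨B, hB, hBA⟩ := Finset.mem_image.1 this
    rwa [← hcode B (hT hB) A (hS hA) hBA]
  · intro hA
    have : code A ∈ S.image code := himg.symm ▸ Finset.mem_image_of_mem code hA
    obtain ⟨B, hB, hBA⟩ := Finset.mem_image.1 this
    rwa [← hcode B (hS hB) A (hT hA) hBA]

lemma decA_spec {Imgs : Finset (Finset (Eu d))} {z : Fin H} {code : Finset (Eu d) → ℕ}
    (hcode : ∀ A ∈ Imgs, ∀ B ∈ Imgs, code A = code B → A = B)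
    {S : Finset (Finset (Eu d))} (hne : S.Nonempty) (hsub : S ⊆ Imgs) :
    decA Imgs z code ((∑ A ∈ S, (2:ℝ)^(code A)) • EuclideanSpace.single z 1) =
      encA z code (S.sup id) := by
  have hex : ∃ S' : Finset (Finset (Eu d)), S'.Nonempty ∧ S' ⊆ Imgs ∧
      (∑ A ∈ S, (2:ℝ)^(code A)) • (EuclideanSpace.single z (1:ℝ)) =
        (∑ A ∈ S', (2:ℝ)^(code A)) • EuclideanSpace.single z 1 := ⟨S, hne, hsub, rfl⟩
  rw [decA, dif_pos hex]
  have hc := hex.choose_spec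
  have : hex.choose = S :=
    sum_eq_of_subset hcode hc.2.1 hsub (smul_single_inj z hc.2.2.symm)
  rw [this]

lemma decA_zero (Imgs : Finset (Finset (Eu d))) (z : Fin H) (code : Finset (Eu d) → ℕ) :
    decA Imgs z code 0 = 0 := by
  rw [decA, dif_neg]
  rintro ⟨S, hne, -, h⟩
  have h0 : ((0:ℝ)) • (EuclideanSpace.single z (1:ℝ)) =
      (∑ A ∈ S, (2:ℝ)^(code A)) • EuclideanSpace.single z 1 := by
    rw [zero_smul]; exact h
  have := smul_single_inj z h0
  have hpos : 0 < ∑ A ∈ S, (2:ℝ)^(code A) :=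
    Finset.sum_pos (fun A _ => by positivity) hne
  linarith

/-- the μ of the architecture -/
noncomputable def muA (Imgs : Finset (Finset (Eu d))) (z : Fin H)
    (code : Finset (Eu d) → ℕ) (p : Eu H × Eu H × Eu H) : Eu H :=
  if ∃ A, A ∈ Imgs ∧ p.1 = encA z code A then p.1 else decA Imgs z code p.2.1

/-- the readout Ψ -/
noncomputable def PsiA (Vs : Finset (Eu d)) (T : Finset ℝ) (Imgs : Finset (Finset (Eu d)))
    (z : Fin H) (code : Finset (Eu d) → ℕ) (v : Eu H) : ↥(Vs ×ˢ T) → ℝ :=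
  if h : ∃ A, A ∈ Imgs ∧ v = encA z code A then
    (fun p => if WithBot.unbotD 0 ((h.choose.image fun q => ⟪q, p.val.1⟫).max) ≤ p.val.2
      then 1 else 0)
  else 0

lemma PsiA_encA {Vs : Finset (Eu d)} {T : Finset ℝ} {Imgs : Finset (Finset (Eu d))}
    {z : Fin H} {code : Finset (Eu d) → ℕ}
    (hcode : ∀ A ∈ Imgs, ∀ B ∈ Imgs, code A = code B → A = B)
    {A : Finset (Eu d)} (hA : A ∈ Imgs) :
    PsiA Vs T Imgs z code (encA z code A) =
      fun p => if WithBot.unbotD 0 ((A.image fun q => ⟪q, p.val.1⟫).max) ≤ p.val.2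
        then 1 else 0 := by
  have hex : ∃ B, B ∈ Imgs ∧ encA z code A = encA z code B := ⟨A, hA, rfl⟩
  rw [PsiA, dif_pos hex]
  have hc := hex.choose_spec
  rw [encA_inj hcode hc.1 hA hc.2.symm]

end ECTAux

open ECTAux

/-- **Exact sampled ECT on finite families (Theorem 4).** For a finite family of embedded
simplicial complexes of dimension at most `D` with injective vertex maps, colored with
common GSWL data, finite sets `Vs ⊆ S^{d-1}` of directions and `T ⊆ ℝ` of thresholds,
depth `L ≥ D`, and hidden dimension `H ≥ 3m`, there exist architecture parameters and a
simplex-wise map `Ψ : ℝ^H → ℝ^{|Vs|·|T|}` such that for every member of the family,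
`Σ_{σ∈K} (−1)^{dim σ} Ψ(h^L_σ)` is the vector of sampled ECT values
`(ECT(K,x)(ν,t))_{(ν,t) ∈ Vs × T}`. -/
theorem exact_sampled_ECT_on_finite_families
    {V : Type*} [DecidableEq V] {d : ℕ} {C F : Type*}
    (G : GSWLData d C F)
    {ι : Type*} [Fintype ι]
    (Ks : ι → Finset (Finset V)) (xs : ι → V → Eu d)
    (hKs : ∀ i, IsComplex (Ks i))
    (hinj : ∀ i, Function.Injective (xs i))
    (D : ℕ) (hD : ∀ i, ∀ σ ∈ Ks i, σ.card ≤ D + 1)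
    (Vs : Finset (Eu d)) (hVs : ∀ ν ∈ Vs, ‖ν‖ = 1) (T : Finset ℝ)
    (L : ℕ) (hL : D ≤ L)
    (mℓ : ℕ → ℕ)
    (hmℓ : ∀ ℓ, mℓ ℓ =
      (Finset.univ.biUnion fun i => (Ks i).image (gcol G (Ks i) (xs i) ℓ)).card)
    (m : ℕ) (hm : m = (Finset.range (L + 1)).sup mℓ)
    (H : ℕ) (hH : 3 * m ≤ H) :
    ∃ (E : C → Eu H) (φ ψ : ℕ → Eu H → Eu H) (μ : ℕ → Eu H × Eu H × Eu H → Eu H)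
      (Ψ : Eu H → (↥(Vs ×ˢ T) → ℝ)),
      ∀ i : ι,
        (∑ σ ∈ Ks i, ((-1 : ℝ) ^ (σ.card - 1)) • Ψ (hid G E φ ψ μ (Ks i) (xs i) L σ)) =
          fun p : ↥(Vs ×ˢ T) => ECT (Ks i) (xs i) p.val.1 p.val.2 := by

  by_cases hemp : ∀ i, Ks i = ∅
  · refine ⟨fun _ => 0, fun _ _ => 0, fun _ _ => 0, fun _ _ => 0, fun _ => 0, fun i => ?_⟩
    funext p
    simp [hemp i, ECT]
  -- nontrivial case : H ≥ 1
  push_neg at hemp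
  obtain ⟨i0, hi0⟩ := hemp
  obtain ⟨σ0, hσ0⟩ := hi0
  have hH1 : 1 ≤ H := by
    have h0 : 0 < mℓ 0 := by
      rw [hmℓ 0]
      exact Finset.card_pos.2 ⟨_, Finset.mem_biUnion.2
        ⟨i0, Finset.mem_univ _, Finset.mem_image_of_mem _ hσ0⟩⟩
    have h1 : mℓ 0 ≤ m := hm ▸ Finset.le_sup (Finset.mem_range.2 (Nat.succ_pos L))
    omega
  set z : Fin H := ⟨0, hH1⟩ with hz
  set Imgs : Finset (Finset (Eu d)) :=
    Finset.univ.biUnion (fun i => (Ks i).image fun σ => σ.image (xs i)) with hImgs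
  have hmemI : ∀ (i : ι), ∀ σ ∈ Ks i, σ.image (xs i) ∈ Imgs := fun i σ hσ =>
    Finset.mem_biUnion.2 ⟨i, Finset.mem_univ _, Finset.mem_image_of_mem _ hσ⟩
  set code : Finset (Eu d) → ℕ := fun A => Imgs.toList.idxOf A with hcodedef
  have hcode : ∀ A ∈ Imgs, ∀ B ∈ Imgs, code A = code B → A = B := by
    intro A hA B hB h
    exact (List.idxOf_inj (Finset.mem_toList.2 hA)).1 h
  -- the architecture
  set E : C → Eu H := EA G.vcol (encA z code) with hE
  set φ : ℕ → Eu H → Eu H := fun _ => phiA Imgs z code with hφ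
  set ψ : ℕ → Eu H → Eu H := fun _ _ => 0 with hψ
  set μ : ℕ → Eu H × Eu H × Eu H → Eu H := fun _ => muA Imgs z code with hμ
  -- the invariant
  have key : ∀ (ℓ : ℕ) (i : ι), ∀ σ ∈ Ks i,
      hid G E φ ψ μ (Ks i) (xs i) ℓ σ =
        (if σ.card ≤ ℓ + 1 then encA z code (σ.image (xs i)) else 0) := by
    intro ℓ
    induction ℓ with
    | zero =>
      intro i σ hσ
      show E (gcol0 G (xs i) σ) = _
      by_cases h1 : σ.card = 1
      · obtain ⟨v, rfl⟩ := Finset.card_eq_one.1 h1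
        have hex : ∃ w : V, ({v} : Finset V) = {w} := ⟨v, rfl⟩
        rw [gcol0, dif_pos hex]
        have hv : hex.choose = v := (Finset.singleton_injective hex.choose_spec).symm
        have hex2 : ∃ p, G.vcol (xs i hex.choose) = G.vcol p := ⟨xs i hex.choose, rfl⟩
        rw [hE, EA, dif_pos hex2]
        have hp : hex2.choose = xs i hex.choose := (G.vcol_inj hex2.choose_spec).symm
        rw [hp, hv, if_pos (by simp), Finset.image_singleton]
      · have hne := (hKs i).1 σ hσ
        have h2 : 2 ≤ σ.card := by
          have := Finset.card_pos.2 hne; omega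
        have hnex : ¬ ∃ w : V, σ = {w} := by
          rintro ⟨w, rfl⟩; simp at h1
        rw [gcol0, dif_neg hnex, hE, EA, dif_neg, if_neg (by omega)]
        rintro ⟨p, hp⟩
        exact G.vcol_ne_scol p _ _ hp.symm
    | succ ℓ IH =>
      intro i σ hσ
      show μ ℓ (hid G E φ ψ μ (Ks i) (xs i) ℓ σ,
        ∑ τ ∈ bdry (Ks i) σ, φ ℓ (hid G E φ ψ μ (Ks i) (xs i) ℓ τ),
        ∑ ρ ∈ cofc (Ks i) σ, ψ ℓ (hid G E φ ψ μ (Ks i) (xs i) ℓ ρ)) = _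
      rw [IH i σ hσ]
      by_cases hc : σ.card ≤ ℓ + 1
      · rw [if_pos hc]
        have hex : ∃ A, A ∈ Imgs ∧ encA z code (σ.image (xs i)) = encA z code A :=
          ⟨σ.image (xs i), hmemI i σ hσ, rfl⟩
        rw [hμ]
        show muA Imgs z code _ = _
        rw [muA, if_pos hex, if_pos (by omega)]
      · rw [if_neg hc]
        have hfirst : ¬ ∃ A, A ∈ Imgs ∧ (0 : Eu H) = encA z code A := by
          rintro ⟨A, -, h⟩; exact encA_ne_zero z code A h.symm
        rw [hμ]
        show muA Imgs z code _ = _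
        rw [muA]
        simp only [if_neg hfirst]
        have hσne := (hKs i).1 σ hσ
        have hcard1 : 1 ≤ σ.card := Finset.card_pos.2 hσne
        by_cases hc2 : σ.card = ℓ + 2
        · -- decode branch
          have h2 : 2 ≤ σ.card := by omega
          set S : Finset (Finset (Eu d)) :=
            (bdry (Ks i) σ).image (fun τ => τ.image (xs i)) with hS
          have hb : (∑ τ ∈ bdry (Ks i) σ, φ ℓ (hid G E φ ψ μ (Ks i) (xs i) ℓ τ)) =
              (∑ A ∈ S, (2:ℝ)^(code A)) • EuclideanSpace.single z 1 := by
            have hstep : ∀ τ ∈ bdry (Ks i) σ,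
                φ ℓ (hid G E φ ψ μ (Ks i) (xs i) ℓ τ) =
                  ((2:ℝ)^(code (τ.image (xs i)))) • EuclideanSpace.single z 1 := by
              intro τ hτ
              obtain ⟨hτK, hτs, hτc⟩ := bdry_mem hτ
              rw [IH i τ hτK, if_pos (by omega), hφ]
              exact phiA_encA hcode (hmemI i τ hτK)
            rw [Finset.sum_congr rfl hstep, ← Finset.sum_smul]
            congr 1
            rw [hS]
            rw [Finset.sum_image]
            intro τ hτ τ' hτ' h
            exact Finset.image_injective (hinj i) h
          rw [hb]
          have hSne : S.Nonempty :=
            Finset.image_nonempty.2 (bdry_nonempty (hKs i) hσ h2)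
          have hSsub : S ⊆ Imgs := by
            intro A hA
            obtain ⟨τ, hτ, rfl⟩ := Finset.mem_image.1 hA
            exact hmemI i τ (bdry_mem hτ).1
          rw [decA_spec hcode hSne hSsub]
          have hsup : S.sup id = σ.image (xs i) := by
            rw [hS, Finset.sup_image]
            exact facet_union (hKs i) (xs i) hσ h2
          rw [hsup, if_pos (by omega)]
        · -- too big: everything 0
          have hzero : ∀ τ ∈ bdry (Ks i) σ,
              φ ℓ (hid G E φ ψ μ (Ks i) (xs i) ℓ τ) = 0 := by
            intro τ hτ
            obtain ⟨hτK, hτs, hτc⟩ := bdry_mem hτ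
            rw [IH i τ hτK, if_neg (by omega), hφ]
            exact phiA_zero Imgs z code
          rw [Finset.sum_congr rfl hzero, Finset.sum_const_zero, decA_zero,
            if_neg (by omega)]
  -- readout
  refine ⟨E, φ, ψ, μ, PsiA Vs T Imgs z code, fun i => ?_⟩
  funext p
  rw [Finset.sum_apply]
  rw [ECT]
  refine Finset.sum_congr rfl fun σ hσ => ?_
  have hcard : σ.card ≤ L + 1 := le_trans (hD i σ hσ) (by omega)
  rw [key L i σ hσ, if_pos hcard]
  rw [Pi.smul_apply, PsiA_encA hcode (hmemI i σ hσ), smul_eq_mul]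
  simp only [entry, Finset.image_image, Function.comp]
  rfl
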